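/- arXiv:2412.01686 — 4 statements merged into one kernel-verified Lean document; each statement's English description precedes it below -/
import Mathlib

section
/- Pre-Pöppe product rule (Lemma 3). Let m ∈ ℕ and x ∈ ℝ. Let p, p̂ : ℝ² → ℂ^{m×m} be continuously differentiable, with p, p̂ and all their first-order partial derivatives bounded, absolutely integrable over (-∞,0] in each argument, and tending to 0 as either argument tends to −∞. Let g, ĝ : (-∞,0]² → ℂ^{m×m} be continuous, bounded, and absolutely integrable in each argument. Then for all z, ζ ∈ (-∞,0]: ∫∫∫_{(-∞,0]³} g(z,ξ)·[(∂₂p)(ξ+x, ν+x)·p̂(ν+x, η+x) + p(ξ+x, ν+x)·(∂₁p̂)(ν+x, η+x)]·ĝ(η,ζ) dν dη dξ = (∫_{-∞}^0 g(z,ξ)·p(ξ+x, x) dξ)·(∫_{-∞}^0 p̂(x, η+x)·ĝ(η,ζ) dη). In operator language this says [[G(P_{0,1}P̂ + P P̂_{1,0})Ĝ]](z,ζ) = [[GP]](z,0)·[[P̂Ĝ]](0,ζ) for semi-additive Hilbert–Schmidt operators P, P̂ with parameter x and Hilbert–Schmidt operators G, Ĝ. -/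
/-!
For fixed `ξ, η` the `ν`-integrand is the `ν`-derivative of `p(ξ+x, ν+x) · p̂(ν+x, η+x)`, a product
that vanishes at `−∞`; so the fundamental theorem of calculus on `(-∞, 0]` collapses the
`ν`-integral to `p(ξ+x, x) · p̂(x, η+x)`. What remains is the double integral of
`(g(z,ξ) p(ξ+x, x)) · (p̂(x, η+x) ĝ(η,ζ))`, which factorises into the product of the
`ξ`- and `η`-integrals.
-/

open MeasureTheory Filter

namespace NCKP

/-- `m × m` complex matrices. -/
abbrev Mat (m : ℕ) := Matrix (Fin m) (Fin m) ℂ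

/-- Matrix-valued kernels on `ℝ²`. -/
abbrev Ker (m : ℕ) := ℝ → ℝ → Mat m

/-- Kernel product `(k₁∗k₂)(z,ζ) := ∫_{-∞}^0 k₁(z,ξ)·k₂(ξ,ζ) dξ`, entrywise Bochner integral. -/
noncomputable def conv {m : ℕ} (k₁ k₂ : Ker m) : Ker m :=
  fun z ζ => Matrix.of fun i j => ∫ ξ in Set.Iic (0:ℝ), (k₁ z ξ * k₂ ξ ζ) i j

/-- `∂_z^a ∂_ζ^b` of a kernel, entrywise. -/
noncomputable def pder {m : ℕ} (a b : ℕ) (p : Ker m) : Ker m :=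
  fun z ζ => Matrix.of fun i j =>
    iteratedDeriv a (fun z' => iteratedDeriv b (fun ζ' => p z' ζ' i j) ζ) z

/-- `p^x_{a,b}(z,ζ) := (∂_z^a ∂_ζ^b p)(z+x, ζ+x)`. -/
noncomputable def pSh {m : ℕ} (p : Ker m) (x : ℝ) (a b : ℕ) : Ker m :=
  fun z ζ => pder a b p (z + x) (ζ + x)

/-- `P̂₁ := p^x_{1,0} + p^x_{0,1}`. -/
noncomputable def pHat1 {m : ℕ} (p : Ker m) (x : ℝ) : Ker m := pSh p x 1 0 + pSh p x 0 1

/-- `P_{[a,b]} := p^x_{a,b} − p^x_{b,a}`. -/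
noncomputable def pBr {m : ℕ} (p : Ker m) (x : ℝ) (a b : ℕ) : Ker m := pSh p x a b - pSh p x b a

/-- Bounded, absolutely integrable over `(-∞,0]` in each argument, and tending to `0`
as either argument tends to `−∞` (entrywise). -/
def KernelDecay {m : ℕ} (k : Ker m) : Prop :=
  (∃ C, ∀ (z ζ : ℝ) (i j : Fin m), ‖k z ζ i j‖ ≤ C) ∧
  (∀ (ζ : ℝ) (i j : Fin m), IntegrableOn (fun z => k z ζ i j) (Set.Iic (0:ℝ))) ∧
  (∀ (z : ℝ) (i j : Fin m), IntegrableOn (fun ζ => k z ζ i j) (Set.Iic (0:ℝ))) ∧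
  (∀ (ζ : ℝ) (i j : Fin m), Tendsto (fun z => k z ζ i j) atBot (nhds 0)) ∧
  (∀ (z : ℝ) (i j : Fin m), Tendsto (fun ζ => k z ζ i j) atBot (nhds 0))

/-- A scattering function (with the `y`,`t` dependence suppressed): smooth, with all
partial derivatives bounded, integrable over `(-∞,0]` in each argument and decaying at `−∞`. -/
def IsScattering {m : ℕ} (p : Ker m) : Prop :=
  (∀ i j : Fin m, ContDiff ℝ (⊤ : ℕ∞) (fun v : ℝ × ℝ => p v.1 v.2 i j)) ∧
  (∀ a b : ℕ, KernelDecay (pder a b p))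

/-- Continuous on `(-∞,0]²`, bounded, and absolutely integrable in each argument. -/
def KernelNice {m : ℕ} (k : Ker m) : Prop :=
  (∀ i j : Fin m, ContinuousOn (fun v : ℝ × ℝ => k v.1 v.2 i j)
    (Set.Iic (0:ℝ) ×ˢ Set.Iic (0:ℝ))) ∧
  (∃ C, ∀ (z ζ : ℝ) (i j : Fin m), ‖k z ζ i j‖ ≤ C) ∧
  (∀ (ζ : ℝ) (i j : Fin m), IntegrableOn (fun z => k z ζ i j) (Set.Iic (0:ℝ))) ∧
  (∀ (z : ℝ) (i j : Fin m), IntegrableOn (fun ζ => k z ζ i j) (Set.Iic (0:ℝ)))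

/-- Entrywise iterated derivative in the parameter `x` of an `x`-family of kernels. -/
noncomputable def xder {m : ℕ} (n : ℕ) (w : ℝ → Ker m) : ℝ → Ker m :=
  fun x z ζ => Matrix.of fun i j => iteratedDeriv n (fun x' => w x' z ζ i j) x

/-- `w x` is the kernel of `V − id`, `V := (id − P)⁻¹`, with parameter `x`:
a smooth family of kernels, whose partial derivatives are all bounded, integrable
and decaying, solving the resolvent equations `w = p^x + p^x∗w = p^x + w∗p^x`. -/
def IsResolventPlus {m : ℕ} (p : Ker m) (w : ℝ → Ker m) : Prop :=
  (∀ i j : Fin m, ContDiff ℝ (⊤ : ℕ∞) (fun v : ℝ × ℝ × ℝ => w v.1 v.2.1 v.2.2 i j)) ∧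
  (∀ (n a b : ℕ) (x : ℝ), KernelDecay (pder a b (xder n w x))) ∧
  (∀ x, w x = pSh p x 0 0 + conv (pSh p x 0 0) (w x)) ∧
  (∀ x, w x = pSh p x 0 0 + conv (w x) (pSh p x 0 0))

/-- `w x` is the kernel of `V† − id`, `V† := (id + P)⁻¹`, with parameter `x`:
it solves `w = −p^x − p^x∗w = −p^x − w∗p^x`. -/
def IsResolventMinus {m : ℕ} (p : Ker m) (w : ℝ → Ker m) : Prop :=
  (∀ i j : Fin m, ContDiff ℝ (⊤ : ℕ∞) (fun v : ℝ × ℝ × ℝ => w v.1 v.2.1 v.2.2 i j)) ∧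
  (∀ (n a b : ℕ) (x : ℝ), KernelDecay (pder a b (xder n w x))) ∧
  (∀ x, w x = -(pSh p x 0 0) - conv (pSh p x 0 0) (w x)) ∧
  (∀ x, w x = -(pSh p x 0 0) - conv (w x) (pSh p x 0 0))

/-- Kernel of the word `A·V'` where `V' = δ + v`. -/
noncomputable def aV {m : ℕ} (A v : Ker m) : Ker m := A + conv A v

/-- Kernel of the word `V·A` where `V = δ + u`. -/
noncomputable def vA {m : ℕ} (u A : Ker m) : Ker m := A + conv u A

/-- Kernel of the word `V A V'` where `V = δ+u`, `V' = δ+v`. -/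
noncomputable def vAv {m : ℕ} (u A v : Ker m) : Ker m := vA u (aV A v)

/-- Kernel of the word `V A V' B V''` where `V = δ+u`, `V' = δ+v`, `V'' = δ+w'`. -/
noncomputable def vAvBv {m : ℕ} (u A v B w' : Ker m) : Ker m := vAv u (conv (aV A v) B) w'

/-- Entrywise `∂_x` of an `x`-family of kernels. -/
noncomputable def dxK {m : ℕ} (E : ℝ → Ker m) (x : ℝ) : Ker m :=
  fun z ζ => Matrix.of fun i j => deriv (fun x' => E x' z ζ i j) x

end NCKP

namespace NCKP

/-- Continuously differentiable kernel, which together with its first-order partial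
derivatives is bounded, absolutely integrable over `(-∞,0]` in each argument, and
tends to `0` as either argument tends to `−∞`. -/
def C1Decay {m : ℕ} (p : Ker m) : Prop :=
  (∀ i j : Fin m, ContDiff ℝ 1 (fun v : ℝ × ℝ => p v.1 v.2 i j)) ∧
  KernelDecay p ∧ KernelDecay (pder 1 0 p) ∧ KernelDecay (pder 0 1 p)

end NCKP

open Set Topology

section Integrability

variable {E : Type*} [NormedAddCommGroup E]

theorem integrableOn_Iic_comp_add_right_iff (f : ℝ → E) (a x : ℝ) :
    IntegrableOn (fun t => f (t + x)) (Iic a) ↔ IntegrableOn f (Iic (a + x)) := by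
  simpa [Function.comp_def] using (measurePreserving_add_right volume x).integrableOn_comp_preimage
    (measurableEmbedding_addRight x) (f := f) (s := Iic (a + x))

theorem IntegrableOn.Iic_of_norm_le {f : ℝ → E} {a C : ℝ} (h : IntegrableOn f (Iic a))
    (hf : AEStronglyMeasurable f) (hC : ∀ t, ‖f t‖ ≤ C) (b : ℝ) : IntegrableOn f (Iic b) := by
  have hIcc : IntegrableOn f (Icc a b) :=
    Measure.integrableOn_of_bounded (by simp) hf (ae_of_all _ hC)
  refine (h.union hIcc).mono_set fun t ht => ?_
  rcases le_or_gt t a with hta | hta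
  · exact Or.inl hta
  · exact Or.inr ⟨hta.le, ht⟩

end Integrability

section MatrixIntegral

variable {𝕜 α β : Type*} [RCLike 𝕜] [MeasurableSpace α] [MeasurableSpace β]
  {μ : Measure α} {ν : Measure β} {l n o q : Type*} [Fintype n]

theorem Matrix.integrable_mul_apply_of_norm_le_right {F : α → Matrix l n 𝕜}
    {G : α → Matrix n o 𝕜} {C : ℝ} (hF : ∀ i k, Integrable (fun a => F a i k) μ)
    (hG : ∀ k j, AEStronglyMeasurable (fun a => G a k j) μ) (hC : ∀ a k j, ‖G a k j‖ ≤ C)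
    (i : l) (j : o) : Integrable (fun a => (F a * G a) i j) μ := by
  simp only [Matrix.mul_apply]
  exact integrable_finsetSum _ fun k _ => (hF i k).mul_bdd (hG k j) (ae_of_all _ (hC · k j))

theorem Matrix.integrable_mul_apply_of_norm_le_left {F : α → Matrix l n 𝕜}
    {G : α → Matrix n o 𝕜} {C : ℝ} (hF : ∀ i k, AEStronglyMeasurable (fun a => F a i k) μ)
    (hC : ∀ a i k, ‖F a i k‖ ≤ C) (hG : ∀ k j, Integrable (fun a => G a k j) μ)
    (i : l) (j : o) : Integrable (fun a => (F a * G a) i j) μ := by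
  simp only [Matrix.mul_apply]
  exact integrable_finsetSum _ fun k _ => (hG k j).bdd_mul (hF i k) (ae_of_all _ (hC · i k))

theorem Matrix.integral_mul_mul_apply [Fintype o] (A : Matrix l n 𝕜) (B : Matrix o q 𝕜)
    {Q : α → Matrix n o 𝕜} (hQ : ∀ k k', Integrable (fun a => Q a k k') μ) (i : l) (j : q) :
    ∫ a, (A * Q a * B) i j ∂μ = (A * Matrix.of (fun k k' => ∫ a, Q a k k' ∂μ) * B) i j := by
  simp only [Matrix.mul_apply, Matrix.of_apply]
  rw [integral_finsetSum _ fun k' _ => (integrable_finsetSum _ fun k _ =>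
    (hQ k k').const_mul _).mul_const _]
  refine Finset.sum_congr rfl fun k' _ => ?_
  rw [integral_mul_const, integral_finsetSum _ fun k _ => (hQ k k').const_mul _]
  simp only [integral_const_mul]

theorem Matrix.integral_integral_mul_apply {F : α → Matrix l n 𝕜} {K : β → Matrix n o 𝕜}
    (hF : ∀ i k, Integrable (fun a => F a i k) μ) (hK : ∀ k j, Integrable (fun b => K b k j) ν)
    (i : l) (j : o) :
    ∫ a, ∫ b, (F a * K b) i j ∂ν ∂μ =
      (Matrix.of (fun i k => ∫ a, F a i k ∂μ) * Matrix.of (fun k j => ∫ b, K b k j ∂ν)) i j := by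
  simp only [Matrix.mul_apply, Matrix.of_apply]
  simp_rw [integral_finsetSum _ fun k _ => (hK k j).const_mul _, integral_const_mul]
  rw [integral_finsetSum _ fun k _ => (hF i k).mul_const _]
  simp only [integral_mul_const]

end MatrixIntegral

section ProductRule

variable {𝕜 : Type*} [RCLike 𝕜]

theorem integral_Iic_deriv_mul_add_mul_deriv_of_tendsto_zero {f g f' g' : ℝ → 𝕜}
    {a Cf Cg : ℝ} (hf : ∀ t, HasDerivAt f (f' t) t) (hg : ∀ t, HasDerivAt g (g' t) t)
    (hf' : IntegrableOn f' (Iic a)) (hg' : IntegrableOn g' (Iic a))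
    (hfC : ∀ t, ‖f t‖ ≤ Cf) (hgC : ∀ t, ‖g t‖ ≤ Cg) (hf0 : Tendsto f atBot (𝓝 0)) :
    IntegrableOn (fun t => f' t * g t + f t * g' t) (Iic a) ∧
      ∫ t in Iic a, f' t * g t + f t * g' t = f a * g a := by
  have hfc : Continuous f := continuous_iff_continuousAt.2 fun t => (hf t).continuousAt
  have hgc : Continuous g := continuous_iff_continuousAt.2 fun t => (hg t).continuousAt
  have hint : IntegrableOn (fun t => f' t * g t + f t * g' t) (Iic a) :=
    (hf'.mul_bdd hgc.aestronglyMeasurable (ae_of_all _ hgC)).add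
      (hg'.bdd_mul hfc.aestronglyMeasurable (ae_of_all _ hfC))
  have hlim : Tendsto (f * g) atBot (𝓝 0) :=
    hf0.zero_mul_isBoundedUnder_le (isBoundedUnder_of ⟨Cg, hgC⟩)
  have hleft : Tendsto (f * g) (𝓝[<] a) (𝓝 (f a * g a)) :=
    ((hfc.mul hgc).tendsto a).mono_left nhdsWithin_le_nhds
  exact ⟨hint, by
    simpa using integral_Iic_deriv_mul_eq_sub (fun t _ => hf t) (fun t _ => hg t) hint hleft hlim⟩

theorem Matrix.integral_Iic_deriv_mul_add_mul_deriv_apply {l n o : Type*} [Fintype n]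
    {U U' : ℝ → Matrix l n 𝕜} {V V' : ℝ → Matrix n o 𝕜} {a CU CV : ℝ}
    (hU : ∀ i k t, HasDerivAt (fun s => U s i k) (U' t i k) t)
    (hV : ∀ k j t, HasDerivAt (fun s => V s k j) (V' t k j) t)
    (hU' : ∀ i k, IntegrableOn (fun t => U' t i k) (Iic a))
    (hV' : ∀ k j, IntegrableOn (fun t => V' t k j) (Iic a))
    (hUC : ∀ t i k, ‖U t i k‖ ≤ CU) (hVC : ∀ t k j, ‖V t k j‖ ≤ CV)
    (hU0 : ∀ i k, Tendsto (fun t => U t i k) atBot (𝓝 0)) (i : l) (j : o) :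
    IntegrableOn (fun t => (U' t * V t + U t * V' t) i j) (Iic a) ∧
      ∫ t in Iic a, (U' t * V t + U t * V' t) i j = (U a * V a) i j := by
  have h k := integral_Iic_deriv_mul_add_mul_deriv_of_tendsto_zero (hU i k) (hV k j) (hU' i k)
    (hV' k j) (hUC · i k) (hVC · k j) (hU0 i k)
  simp only [Matrix.add_apply, Matrix.mul_apply, ← Finset.sum_add_distrib]
  exact ⟨integrable_finsetSum _ fun k _ => (h k).1,
    by rw [integral_finsetSum _ fun k _ => (h k).1]; simp only [(h _).2]⟩

end ProductRule

namespace NCKP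

variable {m : ℕ}

theorem pder_zero_one_apply (p : Ker m) (z ζ : ℝ) (i j : Fin m) :
    pder 0 1 p z ζ i j = deriv (fun t => p z t i j) ζ := by
  simp [pder]

theorem pder_one_zero_apply (p : Ker m) (z ζ : ℝ) (i j : Fin m) :
    pder 1 0 p z ζ i j = deriv (fun t => p t ζ i j) z := by
  simp [pder]

theorem hasDerivAt_pder_zero_one {p : Ker m}
    (hp : ∀ i j, Differentiable ℝ (fun v : ℝ × ℝ => p v.1 v.2 i j)) (z t : ℝ) (i j : Fin m) :
    HasDerivAt (fun s => p z s i j) (pder 0 1 p z t i j) t := by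
  rw [pder_zero_one_apply]
  exact ((hp i j).comp ((differentiable_const z).prodMk differentiable_id) t).hasDerivAt

theorem hasDerivAt_pder_one_zero {p : Ker m}
    (hp : ∀ i j, Differentiable ℝ (fun v : ℝ × ℝ => p v.1 v.2 i j)) (t ζ : ℝ) (i j : Fin m) :
    HasDerivAt (fun s => p s ζ i j) (pder 1 0 p t ζ i j) t := by
  rw [pder_one_zero_apply]
  exact ((hp i j).comp (differentiable_id.prodMk (differentiable_const ζ)) t).hasDerivAt

theorem KernelDecay.integrableOn_snd_comp_add {k : Ker m} (hk : KernelDecay k) {z : ℝ}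
    {i j : Fin m} (hm : Measurable fun t => k z t i j) (x : ℝ) :
    IntegrableOn (fun t => k z (t + x) i j) (Iic 0) := by
  obtain ⟨⟨C, hC⟩, -, hint, -⟩ := hk
  exact (integrableOn_Iic_comp_add_right_iff (k z · i j) 0 x).2
    (IntegrableOn.Iic_of_norm_le (hint z i j) hm.aestronglyMeasurable (hC z · i j) _)

theorem KernelDecay.integrableOn_fst_comp_add {k : Ker m} (hk : KernelDecay k) {ζ : ℝ}
    {i j : Fin m} (hm : Measurable fun t => k t ζ i j) (x : ℝ) :
    IntegrableOn (fun t => k (t + x) ζ i j) (Iic 0) := by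
  obtain ⟨⟨C, hC⟩, hint, -⟩ := hk
  exact (integrableOn_Iic_comp_add_right_iff (k · ζ i j) 0 x).2
    (IntegrableOn.Iic_of_norm_le (hint ζ i j) hm.aestronglyMeasurable (hC · ζ i j) _)

theorem C1Decay.integral_Iic_pder_mul_add_mul_pder_apply {p ph : Ker m} (hp : C1Decay p)
    (hph : C1Decay ph) (x b c : ℝ) (i j : Fin m) :
    IntegrableOn (fun ν => (pder 0 1 p b (ν + x) * ph (ν + x) c
        + p b (ν + x) * pder 1 0 ph (ν + x) c) i j) (Iic 0) ∧
      ∫ ν in Iic 0, (pder 0 1 p b (ν + x) * ph (ν + x) c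
        + p b (ν + x) * pder 1 0 ph (ν + x) c) i j = (p b x * ph x c) i j := by
  obtain ⟨hpC1, ⟨⟨Cp, hCp⟩, -, -, -, hp0⟩, -, hp01⟩ := hp
  obtain ⟨hphC1, ⟨⟨Cph, hCph⟩, -⟩, hph10, -⟩ := hph
  have hpD i k := (hpC1 i k).differentiable one_ne_zero
  have hphD i k := (hphC1 i k).differentiable one_ne_zero
  have hshift : Tendsto (· + x) atBot atBot := tendsto_atBot_add_const_right _ x tendsto_id
  simpa only [zero_add] using Matrix.integral_Iic_deriv_mul_add_mul_deriv_apply (a := 0)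
    (U := fun ν => p b (ν + x)) (V := fun ν => ph (ν + x) c)
    (fun i k t => (hasDerivAt_pder_zero_one hpD b (t + x) i k).comp_add_const t x)
    (fun k j t => (hasDerivAt_pder_one_zero hphD (t + x) c k j).comp_add_const t x)
    (fun i k => hp01.integrableOn_snd_comp_add
      (by simpa only [pder_zero_one_apply] using measurable_deriv _) x)
    (fun k j => hph10.integrableOn_fst_comp_add
      (by simpa only [pder_one_zero_apply] using measurable_deriv _) x)
    (fun t i k => hCp b (t + x) i k) (fun t k j => hCph (t + x) c k j)
    (fun i k => (hp0 b i k).comp hshift) i j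

/-- **Pre-Pöppe product rule (Lemma 3).** For semi-additive kernels `p`, `p̂` with
parameter `x` and kernels `g`, `ĝ`, for all `z, ζ ∈ (-∞,0]`:
`∫∫∫ g(z,ξ)·[(∂₂p)(ξ+x,ν+x)·p̂(ν+x,η+x) + p(ξ+x,ν+x)·(∂₁p̂)(ν+x,η+x)]·ĝ(η,ζ) dν dη dξ
  = (∫ g(z,ξ)·p(ξ+x,x) dξ)·(∫ p̂(x,η+x)·ĝ(η,ζ) dη)`;
in operator language, `[[G(P_{0,1}P̂ + P P̂_{1,0})Ĝ]](z,ζ) = [[GP]](z,0)·[[P̂Ĝ]](0,ζ)`. -/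
theorem pre_poppe_product {m : ℕ} (x : ℝ) (p ph : Ker m)
    (hp : C1Decay p) (hph : C1Decay ph)
    (g gh : Ker m) (hg : KernelNice g) (hgh : KernelNice gh) :
    ∀ z ∈ Set.Iic (0:ℝ), ∀ ζ ∈ Set.Iic (0:ℝ),
      (Matrix.of fun i j =>
        ∫ ξ in Set.Iic (0:ℝ), ∫ η in Set.Iic (0:ℝ), ∫ ν in Set.Iic (0:ℝ),
          (g z ξ *
            ((pder 0 1 p (ξ + x) (ν + x)) * ph (ν + x) (η + x)
              + p (ξ + x) (ν + x) * (pder 1 0 ph (ν + x) (η + x))) *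
            gh η ζ) i j : Mat m)
      =
      (Matrix.of fun i j => ∫ ξ in Set.Iic (0:ℝ), (g z ξ * p (ξ + x) x) i j : Mat m) *
      (Matrix.of fun i j => ∫ η in Set.Iic (0:ℝ), (ph x (η + x) * gh η ζ) i j : Mat m) := by
  intro z _ ζ _
  ext i j
  have hν : ∀ ξ η, ∫ ν in Iic 0, (g z ξ * (pder 0 1 p (ξ + x) (ν + x) * ph (ν + x) (η + x)
      + p (ξ + x) (ν + x) * pder 1 0 ph (ν + x) (η + x)) * gh η ζ) i j
      = (g z ξ * p (ξ + x) x * (ph x (η + x) * gh η ζ)) i j := by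
    intro ξ η
    have hFTC := C1Decay.integral_Iic_pder_mul_add_mul_pder_apply hp hph x (ξ + x) (η + x)
    rw [Matrix.integral_mul_mul_apply _ _ fun k l => (hFTC k l).1,
      show Matrix.of _ = p (ξ + x) x * ph x (η + x) from Matrix.ext fun k l => (hFTC k l).2]
    simp only [Matrix.mul_assoc]
  obtain ⟨Cp, hCp⟩ := hp.2.1.1
  obtain ⟨Cph, hCph⟩ := hph.2.1.1
  have hGP := Matrix.integrable_mul_apply_of_norm_le_right (hg.2.2.2 z)
    (fun k l => ((hp.1 k l).continuous.comp
      ((continuous_add_const x).prodMk continuous_const)).aestronglyMeasurable)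
    (fun ξ => hCp (ξ + x) x)
  have hPG := Matrix.integrable_mul_apply_of_norm_le_left
    (fun k l => ((hph.1 k l).continuous.comp
      (continuous_const.prodMk (continuous_add_const x))).aestronglyMeasurable)
    (fun η => hCph x (η + x)) (hgh.2.2.1 ζ)
  simp only [Matrix.of_apply, hν]
  exact Matrix.integral_integral_mul_apply hGP hPG i j

end NCKP
end

section
/- Partial fractions identity [V] = 2[[G]] for the mKP GLM equation (equation (4.1)). Let p be a scattering function, x ∈ ℝ, and w₊, w₋ resolvent kernels for p. Then for all z, ζ ∈ (-∞,0]: w₊(z,ζ) − w₋(z,ζ) = 2·(p^x_{0,0} + w₊∗p^x_{0,0} + p^x_{0,0}∗w₋ + w₊∗p^x_{0,0}∗w₋)(z,ζ). That is, the kernel w₊ − w₋ of V − V† equals twice the kernel of G = V P V†, the solution operator of the Gelfand–Levitan–Marchenko equation P = G(id − P²). -/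
open MeasureTheory Filter

/-
Write `P = p^x_{0,0}`, `u = w₊`, `v = w₋`. The resolvent equations give `u∗P = u − P` and
`P∗v = −v − P`. Expanding the triple product `u∗P∗v` from both sides of the associativity
law (Fubini) gives `u∗P∗v = u∗v − P∗v = −u∗v − u∗P`; adding the two eliminates `u∗v`, so
`2 u∗P∗v = v − u + 2P`, which is exactly the claimed identity.
-/

open Set

namespace NCKP

section MatrixIntegral

variable {α : Type*} [MeasurableSpace α] {μ : Measure α} {l n o : Type*} [Fintype n]
  {𝕜 : Type*} [RCLike 𝕜]

theorem integrable_mul_apply_of_bounded_right {A : α → Matrix l n 𝕜} {B : α → Matrix n o 𝕜}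
    (hA : ∀ i k, Integrable (fun a => A a i k) μ)
    (hBm : ∀ k j, AEStronglyMeasurable (fun a => B a k j) μ)
    {C : ℝ} (hBb : ∀ a k j, ‖B a k j‖ ≤ C) (i : l) (j : o) :
    Integrable (fun a => (A a * B a) i j) μ := by
  simp only [Matrix.mul_apply]
  exact integrable_finsetSum _ fun k _ => (hA i k).mul_bdd (hBm k j) (ae_of_all _ (hBb · k j))

theorem integrable_mul_apply_of_bounded_left {A : α → Matrix l n 𝕜} {B : α → Matrix n o 𝕜}
    (hAm : ∀ i k, AEStronglyMeasurable (fun a => A a i k) μ) {C : ℝ}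
    (hAb : ∀ a i k, ‖A a i k‖ ≤ C) (hB : ∀ k j, Integrable (fun a => B a k j) μ)
    (i : l) (j : o) :
    Integrable (fun a => (A a * B a) i j) μ := by
  simp only [Matrix.mul_apply]
  exact integrable_finsetSum _ fun k _ => (hB k j).bdd_mul (hAm i k) (ae_of_all _ (hAb · i k))

theorem integrable_prod_mul_mul_apply {β : Type*} [MeasurableSpace β] {ν : Measure β}
    [SFinite ν] {p : Type*} [Fintype o] {A : α → Matrix l n 𝕜} {B : α × β → Matrix n o 𝕜}
    {D : β → Matrix o p 𝕜} (hA : ∀ i k, Integrable (fun a => A a i k) μ)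
    (hBm : ∀ k k', AEStronglyMeasurable (fun q => B q k k') (μ.prod ν)) {C : ℝ}
    (hBb : ∀ q k k', ‖B q k k'‖ ≤ C) (hD : ∀ k' j, Integrable (fun b => D b k' j) ν)
    (i : l) (j : p) :
    Integrable (fun q : α × β => (A q.1 * B q * D q.2) i j) (μ.prod ν) := by
  simp only [Matrix.mul_apply, Finset.sum_mul]
  refine integrable_finsetSum _ fun k' _ => integrable_finsetSum _ fun k _ => ?_
  exact (((hA i k).mul_prod (hD k' j)).bdd_mul (hBm k k') (ae_of_all _ (hBb · k k'))).congr
    (ae_of_all _ fun q => by ring)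

theorem mul_integral_apply (A : Matrix l n 𝕜) {f : α → Matrix n o 𝕜}
    (hf : ∀ k j, Integrable (fun a => f a k j) μ) (i : l) (j : o) :
    (A * Matrix.of fun k j => ∫ a, f a k j ∂μ) i j = ∫ a, (A * f a) i j ∂μ := by
  simp only [Matrix.mul_apply, Matrix.of_apply]
  rw [integral_finsetSum _ fun k _ => (hf k j).const_mul (A i k)]
  exact Finset.sum_congr rfl fun k _ => (integral_const_mul _ _).symm

theorem integral_mul_apply {f : α → Matrix l n 𝕜} (B : Matrix n o 𝕜)
    (hf : ∀ i k, Integrable (fun a => f a i k) μ) (i : l) (j : o) :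
    ((Matrix.of fun i k => ∫ a, f a i k ∂μ) * B) i j = ∫ a, (f a * B) i j ∂μ := by
  simp only [Matrix.mul_apply, Matrix.of_apply]
  rw [integral_finsetSum _ fun k _ => (hf i k).mul_const (B k j)]
  exact Finset.sum_congr rfl fun k _ => (integral_mul_const _ _).symm

end MatrixIntegral

theorem integrableOn_Iic_comp_add_right {E : Type*} [NormedAddCommGroup E] {f : ℝ → E}
    (hf : Continuous f) {a : ℝ} (hfa : IntegrableOn f (Iic a)) (x : ℝ) :
    IntegrableOn (fun z => f (z + x)) (Iic a) := by
  have hfx : IntegrableOn f (Iic (a + x)) :=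
    integrableOn_Iic_iff_integrableAtFilter_atBot.mpr
      ⟨⟨Iic a, Filter.Iic_mem_atBot a, hfa⟩, hf.locallyIntegrable.locallyIntegrableOn _⟩
  have hpre : (· + x) ⁻¹' Iic (a + x) = Iic a := by ext z; simp
  rw [← hpre]
  exact ((measurePreserving_add_right volume x).integrableOn_comp_preimage
    (measurableEmbedding_addRight x)).mpr hfx

section KernelNice

variable {m : ℕ} {A B C : Ker m}

theorem KernelNice.aestronglyMeasurable_fst (hA : KernelNice A) {ζ : ℝ} (hζ : ζ ≤ 0)
    (i j : Fin m) : AEStronglyMeasurable (fun ξ => A ξ ζ i j) (volume.restrict (Iic 0)) :=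
  ((hA.1 i j).comp (continuous_id.prodMk continuous_const).continuousOn
    fun _ hξ => ⟨hξ, hζ⟩)
    |>.aestronglyMeasurable measurableSet_Iic

theorem KernelNice.aestronglyMeasurable_snd (hA : KernelNice A) {z : ℝ} (hz : z ≤ 0)
    (i j : Fin m) : AEStronglyMeasurable (fun ξ => A z ξ i j) (volume.restrict (Iic 0)) :=
  ((hA.1 i j).comp (continuous_const.prodMk continuous_id).continuousOn
    fun _ hξ => ⟨hz, hξ⟩)
    |>.aestronglyMeasurable measurableSet_Iic

theorem KernelNice.aestronglyMeasurable_prod (hA : KernelNice A) (i j : Fin m) :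
    AEStronglyMeasurable (fun q : ℝ × ℝ => A q.1 q.2 i j)
      ((volume.restrict (Iic 0)).prod (volume.restrict (Iic 0))) := by
  rw [Measure.prod_restrict]
  exact (hA.1 i j).aestronglyMeasurable (measurableSet_Iic.prod measurableSet_Iic)

theorem KernelNice.integrableOn_mul_apply (hA : KernelNice A) (hB : KernelNice B) (z : ℝ)
    {ζ : ℝ} (hζ : ζ ≤ 0) (i j : Fin m) :
    IntegrableOn (fun ξ => (A z ξ * B ξ ζ) i j) (Iic 0) :=
  have ⟨_, hBb⟩ := hB.2.1
  integrable_mul_apply_of_bounded_right (hA.2.2.2 z) (hB.aestronglyMeasurable_fst hζ)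
    (hBb · ζ) i j

theorem conv_sub_left_apply (hA : KernelNice A) (hB : KernelNice B) (hC : KernelNice C)
    (z : ℝ) {ζ : ℝ} (hζ : ζ ≤ 0) : conv (A - B) C z ζ = conv A C z ζ - conv B C z ζ := by
  ext i j
  simp only [conv, Matrix.of_apply, Matrix.sub_apply, Pi.sub_apply, Matrix.sub_mul]
  exact integral_sub (hA.integrableOn_mul_apply hC z hζ i j)
    (hB.integrableOn_mul_apply hC z hζ i j)

theorem conv_add_right_apply (hA : KernelNice A) (hB : KernelNice B) (hC : KernelNice C)
    (z : ℝ) {ζ : ℝ} (hζ : ζ ≤ 0) : conv A (B + C) z ζ = conv A B z ζ + conv A C z ζ := by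
  ext i j
  simp only [conv, Matrix.of_apply, Matrix.add_apply, Pi.add_apply, Matrix.mul_add]
  exact integral_add (hA.integrableOn_mul_apply hB z hζ i j)
    (hA.integrableOn_mul_apply hC z hζ i j)

theorem conv_neg_right (A B : Ker m) : conv A (-B) = -conv A B := by
  funext z ζ
  ext i j
  simp only [conv, Matrix.of_apply, Pi.neg_apply, Matrix.neg_apply, Matrix.mul_neg,
    integral_neg]

theorem conv_assoc_apply (hA : KernelNice A) (hB : KernelNice B) (hC : KernelNice C)
    (z ζ : ℝ) : conv (conv A B) C z ζ = conv A (conv B C) z ζ := by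
  obtain ⟨CB, hBb⟩ := hB.2.1
  ext i j
  calc conv (conv A B) C z ζ i j
      = ∫ η in Iic 0, ∫ ξ in Iic 0, (A z ξ * B ξ η * C η ζ) i j := by
        refine setIntegral_congr_fun measurableSet_Iic fun η hη => ?_
        exact integral_mul_apply _ (hA.integrableOn_mul_apply hB z hη) i j
    _ = ∫ ξ in Iic 0, ∫ η in Iic 0, (A z ξ * B ξ η * C η ζ) i j :=
        (integral_integral_swap (integrable_prod_mul_mul_apply (hA.2.2.2 z)
          hB.aestronglyMeasurable_prod (fun q => hBb q.1 q.2) (hC.2.2.1 ζ) i j)).symm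
    _ = conv A (conv B C) z ζ i j := by
        refine setIntegral_congr_fun measurableSet_Iic fun ξ hξ => ?_
        simp only [Matrix.mul_assoc]
        exact (mul_integral_apply _ (integrable_mul_apply_of_bounded_left
          (hB.aestronglyMeasurable_snd hξ) (hBb ξ) (hC.2.2.1 ζ)) i j).symm

theorem kernelNice_of_continuous (hc : ∀ i j, Continuous fun q : ℝ × ℝ => A q.1 q.2 i j)
    (hd : KernelDecay A) : KernelNice A :=
  ⟨fun i j => (hc i j).continuousOn, hd.1, hd.2.1, hd.2.2.1⟩

end KernelNice

section Scattering

variable {m : ℕ}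

@[simp]
theorem pder_zero_zero (k : Ker m) : pder 0 0 k = k := by
  funext z ζ
  ext i j
  simp [pder]

@[simp]
theorem xder_zero (w : ℝ → Ker m) (x : ℝ) : xder 0 w x = w x := by
  funext z ζ
  ext i j
  simp [xder]

theorem IsScattering.kernelNice_pSh {p : Ker m} (hp : IsScattering p) (x : ℝ) :
    KernelNice (pSh p x 0 0) := by
  have hpSh : pSh p x 0 0 = fun z ζ => p (z + x) (ζ + x) := by
    unfold pSh; rw [pder_zero_zero]
  obtain ⟨⟨C, hpb⟩, hpi₁, hpi₂, -⟩ := pder_zero_zero p ▸ hp.2 0 0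
  have hpc (i j : Fin m) : Continuous fun q : ℝ × ℝ => p q.1 q.2 i j := (hp.1 i j).continuous
  rw [hpSh]
  refine ⟨fun i j => ((hpc i j).comp (f := fun q : ℝ × ℝ => (q.1 + x, q.2 + x))
      (by fun_prop)).continuousOn, ⟨C, fun z ζ => hpb (z + x) (ζ + x)⟩,
    fun ζ i j => ?_, fun z i j => ?_⟩
  · exact integrableOn_Iic_comp_add_right
      ((hpc i j).comp (f := fun z => (z, ζ + x)) (by fun_prop)) (hpi₁ (ζ + x) i j) x
  · exact integrableOn_Iic_comp_add_right
      ((hpc i j).comp (f := fun ζ => (z + x, ζ)) (by fun_prop)) (hpi₂ (z + x) i j) x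

theorem kernelNice_apply {w : ℝ → Ker m}
    (hc : ∀ i j, Continuous fun v : ℝ × ℝ × ℝ => w v.1 v.2.1 v.2.2 i j) {x : ℝ}
    (hd : KernelDecay (w x)) : KernelNice (w x) :=
  kernelNice_of_continuous
    (fun i j => (hc i j).comp (f := fun q : ℝ × ℝ => (x, q.1, q.2)) (by fun_prop)) hd

theorem IsResolventPlus.kernelNice {p : Ker m} {w : ℝ → Ker m} (hw : IsResolventPlus p w)
    (x : ℝ) : KernelNice (w x) :=
  kernelNice_apply (fun i j => (hw.1 i j).continuous) (by simpa using hw.2.1 0 0 0 x)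

theorem IsResolventMinus.kernelNice {p : Ker m} {w : ℝ → Ker m} (hw : IsResolventMinus p w)
    (x : ℝ) : KernelNice (w x) :=
  kernelNice_apply (fun i j => (hw.1 i j).continuous) (by simpa using hw.2.1 0 0 0 x)

end Scattering

theorem sub_eq_two_nsmul_of_resolvent_eqs {m : ℕ} {P u v : Ker m} (hP : KernelNice P)
    (hu : KernelNice u) (hv : KernelNice v) (hu_eq : u = P + conv u P)
    (hv_eq : v = -P - conv P v) (z : ℝ) {ζ : ℝ} (hζ : ζ ≤ 0) :
    u z ζ - v z ζ = (2:ℕ) • ((P + conv u P + conv P v + conv u (conv P v)) z ζ) := by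
  have huP : conv u P = u - P := by rw [eq_sub_iff_add_eq', ← hu_eq]
  have hPv : conv P v = -(v + P) := by nth_rewrite 2 [hv_eq]; abel
  have hright : conv u (conv P v) z ζ = -(conv u v z ζ + conv u P z ζ) := by
    rw [hPv, conv_neg_right, Pi.neg_apply, Pi.neg_apply, conv_add_right_apply hu hv hP z hζ]
  have hleft : conv u (conv P v) z ζ = conv u v z ζ - conv P v z ζ := by
    rw [← conv_assoc_apply hu hP hv, huP, conv_sub_left_apply hu hP hv z hζ]
  simp only [huP, hPv, Pi.add_apply, Pi.sub_apply, Pi.neg_apply] at hright hleft ⊢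
  linear_combination (norm := module) -hright - hleft

/-- **Partial fractions identity `[V] = 2[[G]]` (equation (4.1)):**
`w₊ − w₋ = 2(p^x + w₊∗p^x + p^x∗w₋ + w₊∗p^x∗w₋)`, i.e. the kernel of `V − V†`
equals twice the kernel of `G = V P V†`, the solution operator of the GLM equation
`P = G(id − P²)`, for a scattering function `p` and resolvent kernels `w₊`, `w₋`. -/
theorem partial_fractions_G {m : ℕ} (p : Ker m) (hp : IsScattering p)
    (wp wm : ℝ → Ker m) (hwp : IsResolventPlus p wp) (hwm : IsResolventMinus p wm)
    (x : ℝ) :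
    ∀ z ∈ Set.Iic (0:ℝ), ∀ ζ ∈ Set.Iic (0:ℝ),
      (wp x) z ζ - (wm x) z ζ
      =
      (2:ℕ) • ((pSh p x 0 0 + conv (wp x) (pSh p x 0 0) + conv (pSh p x 0 0) (wm x)
        + conv (wp x) (conv (pSh p x 0 0) (wm x))) z ζ) :=
  fun z _ _ hζ => sub_eq_two_nsmul_of_resolvent_eqs (hp.kernelNice_pSh x)
    (hwp.kernelNice x) (hwm.kernelNice x) (hwp.2.2.2 x) (hwm.2.2.1 x) z hζ

end NCKP
end

section
/- From the log-potential mKP equation to the amKP form (equations (1.2) ⇒ (1.3)). Let q : ℝ³ → GL_m(ℂ) be smooth (pointwise invertible m×m matrices, coordinates (x,y,t)), and let s : ℝ³ → ℂ^{m×m} be smooth with ∂_x s = ∂_y(q^{-1}q_y + (q^{-1}q_x)²), where subscripts denote partial derivatives. Suppose q satisfies the log-potential mKP equation q·s = (1/3)(q_t − q_{xxx}) + q_x q^{-1} q_{xx} + q_x q^{-1} q_y + q_y q^{-1} q_x. Then ĝ := q_x q^{-1} and f̂ := q_y q^{-1} satisfy the non-commutative modified KP equations in the form: f̂_x = ĝ_y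 + [ĝ, f̂], and f̂_y = (1/3)(ĝ_t − ĝ_{xxx}) + 2 ĝ ĝ_x ĝ + {f̂, ĝ_x} + [ĝ, ĝ_{xx}] − [ĝ², f̂]. -/
open MeasureTheory Filter

namespace NCKP

/-- `∂_x^c ∂_y^d ∂_t^e` of a matrix-valued function of `(x,y,t)`, entrywise. -/
noncomputable def D3 {m : ℕ} (c d e : ℕ) (u : ℝ → ℝ → ℝ → Mat m) : ℝ → ℝ → ℝ → Mat m :=
  fun x y t => Matrix.of fun i j =>
    iteratedDeriv c (fun x' =>
      iteratedDeriv d (fun y' =>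
        iteratedDeriv e (fun t' => u x' y' t' i j) t) y) x

/-- Entrywise smoothness of a matrix-valued function of `(x,y,t)`. -/
def Smooth3 {m : ℕ} (u : ℝ → ℝ → ℝ → Mat m) : Prop :=
  ∀ i j : Fin m, ContDiff ℝ (⊤ : ℕ∞) (fun v : ℝ × ℝ × ℝ => u v.1 v.2.1 v.2.2 i j)

end NCKP

/-!
Write `ĝ = q_x q⁻¹`, `f̂ = q_y q⁻¹`, `ĥ = q_t q⁻¹`. The first equation is the zero-curvature
identity `∂_v(q_w q⁻¹) = ∂_w(q_v q⁻¹) + [q_v q⁻¹, q_w q⁻¹]` for right logarithmic derivatives,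
which only uses `q_xy = q_yx`.

For the second, the log-potential equation says `q s q⁻¹ = P` for an explicit noncommutative
polynomial `P` in `ĝ, f̂, ĥ` and the `x`-derivatives of `ĝ`, while
`q⁻¹q_y + (q⁻¹q_x)² = q⁻¹(f̂ + ĝ²)q`. As `∂(q⁻¹Xq) = q⁻¹(∂X + [X, ∂q q⁻¹])q`, the defining
relation of `s` becomes `P_x + [P, ĝ] = (f̂ + ĝ²)_y + [f̂ + ĝ², f̂]`. Expanding `P_x` by the Leibniz
rule and eliminating `ĥ_x` and `f̂_x` by zero curvature, the `ĥ`-terms cancel and what is left is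
the formula for `f̂_y`.
-/

open scoped ContDiff

namespace NCKP

section DirDeriv

variable {E F A : Type*} [NormedAddCommGroup E] [NormedSpace ℝ E]
  [NormedAddCommGroup F] [NormedSpace ℝ F] [NormedRing A] [NormedAlgebra ℝ A]

noncomputable def dirDeriv (v : E) (U : E → F) : E → F := fun p => fderiv ℝ U p v

variable {U V : E → F} (v w : E)

theorem dirDeriv_add (hU : Differentiable ℝ U) (hV : Differentiable ℝ V) :
    dirDeriv v (U + V) = dirDeriv v U + dirDeriv v V := by
  ext p; simp [dirDeriv, fderiv_add (hU p) (hV p)]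

theorem dirDeriv_sub (hU : Differentiable ℝ U) (hV : Differentiable ℝ V) :
    dirDeriv v (U - V) = dirDeriv v U - dirDeriv v V := by
  ext p; simp [dirDeriv, fderiv_sub (hU p) (hV p)]

theorem dirDeriv_smul (hU : Differentiable ℝ U) (c : ℝ) :
    dirDeriv v (c • U) = c • dirDeriv v U := by
  ext p; simp [dirDeriv, fderiv_const_smul (hU p) c]

theorem dirDeriv_mul {U V : E → A} (hU : Differentiable ℝ U) (hV : Differentiable ℝ V) :
    dirDeriv v (U * V) = dirDeriv v U * V + U * dirDeriv v V := by
  ext p; simp [dirDeriv, fderiv_mul' (hU p) (hV p), add_comm]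

theorem dirDeriv_inverse_comp [HasSummableGeomSeries A] {Q : E → A} (hQ : Differentiable ℝ Q)
    (hunit : ∀ p, IsUnit (Q p)) :
    dirDeriv v (Ring.inverse ∘ Q) = -((Ring.inverse ∘ Q) * dirDeriv v Q * (Ring.inverse ∘ Q)) := by
  ext p
  obtain ⟨u, hu⟩ := hunit p
  have hinv : HasFDerivAt Ring.inverse _ (Q p) := hu ▸ hasFDerivAt_ringInverse (𝕜 := ℝ) u
  simp [dirDeriv, (hinv.comp p (hQ p).hasFDerivAt).fderiv, ← hu]

theorem contDiff_dirDeriv {n k : WithTop ℕ∞} (hU : ContDiff ℝ n U) (hk : k + 1 ≤ n) :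
    ContDiff ℝ k (dirDeriv v U) :=
  (ContinuousLinearMap.apply ℝ F v).contDiff.comp (hU.fderiv_right hk)

@[fun_prop]
theorem contDiff_infty_dirDeriv (hU : ContDiff ℝ ∞ U) : ContDiff ℝ ∞ (dirDeriv v U) :=
  contDiff_dirDeriv v hU (by simp)

theorem dirDeriv_comm (hU : ContDiff ℝ 2 U) :
    dirDeriv v (dirDeriv w U) = dirDeriv w (dirDeriv v U) := by
  ext p
  have hd : DifferentiableAt ℝ (fderiv ℝ U) p :=
    (hU.fderiv_right le_rfl).differentiable one_ne_zero p
  have hflip : ∀ u, fderiv ℝ (fun z => fderiv ℝ U z u) p = (fderiv ℝ (fderiv ℝ U) p).flip u := by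
    intro u
    rw [fderiv_clm_apply hd (differentiableAt_const u)]
    simp
  show fderiv ℝ (fun z => fderiv ℝ U z w) p v = fderiv ℝ (fun z => fderiv ℝ U z v) p w
  rw [hflip, hflip, ContinuousLinearMap.flip_apply, ContinuousLinearMap.flip_apply]
  exact hU.contDiffAt.isSymmSndFDerivAt (by simp [minSmoothness_of_isRCLikeNormedField]) v w

end DirDeriv

section Units

variable {α M₀ : Type*} [MonoidWithZero M₀] {Q : α → M₀}

theorem inverse_comp_mul_self (hunit : ∀ p, IsUnit (Q p)) : (Ring.inverse ∘ Q) * Q = 1 :=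
  funext fun p => Ring.inverse_mul_cancel _ (hunit p)

theorem mul_inverse_comp (hunit : ∀ p, IsUnit (Q p)) : Q * (Ring.inverse ∘ Q) = 1 :=
  funext fun p => Ring.mul_inverse_cancel _ (hunit p)

theorem mul_inverse_comp_cancel_left (hunit : ∀ p, IsUnit (Q p)) (X : α → M₀) :
    Q * ((Ring.inverse ∘ Q) * X) = X := by
  rw [← mul_assoc, mul_inverse_comp hunit, one_mul]

theorem inverse_comp_mul_mul_cancel (hunit : ∀ p, IsUnit (Q p)) {X Y : α → M₀}
    (h : (Ring.inverse ∘ Q) * X * Q = (Ring.inverse ∘ Q) * Y * Q) : X = Y := by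
  have hconj : ∀ Z, Q * ((Ring.inverse ∘ Q) * Z * Q) * (Ring.inverse ∘ Q) = Z := fun Z => by
    rw [mul_assoc, mul_assoc, mul_inverse_comp hunit, mul_one, mul_inverse_comp_cancel_left hunit]
  rw [← hconj X, h, hconj]

end Units

section LogDeriv

variable {E A : Type*} [NormedAddCommGroup E] [NormedSpace ℝ E]
  [NormedRing A] [NormedAlgebra ℝ A] {Q : E → A}

theorem _root_.ContDiff.ringInverse_comp [HasSummableGeomSeries A] {n : WithTop ℕ∞}
    (hQ : ContDiff ℝ n Q) (hunit : ∀ p, IsUnit (Q p)) : ContDiff ℝ n (Ring.inverse ∘ Q) :=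
  contDiff_iff_contDiffAt.2 fun p => by
    obtain ⟨u, hu⟩ := hunit p
    exact (hu ▸ contDiffAt_ringInverse ℝ u).comp p hQ.contDiffAt

theorem _root_.Differentiable.ringInverse_comp [HasSummableGeomSeries A]
    (hQ : Differentiable ℝ Q) (hunit : ∀ p, IsUnit (Q p)) :
    Differentiable ℝ (Ring.inverse ∘ Q) :=
  hQ.inverse hunit

noncomputable def rightLogDeriv (v : E) (Q : E → A) : E → A := dirDeriv v Q * (Ring.inverse ∘ Q)

noncomputable def leftLogDeriv (v : E) (Q : E → A) : E → A := (Ring.inverse ∘ Q) * dirDeriv v Q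

variable (v w : E)

theorem dirDeriv_eq_rightLogDeriv_mul (hunit : ∀ p, IsUnit (Q p)) :
    dirDeriv v Q = rightLogDeriv v Q * Q := by
  rw [rightLogDeriv, mul_assoc, inverse_comp_mul_self hunit, mul_one]

theorem leftLogDeriv_eq_inverse_comp_mul_rightLogDeriv_mul (hunit : ∀ p, IsUnit (Q p)) :
    leftLogDeriv v Q = (Ring.inverse ∘ Q) * rightLogDeriv v Q * Q := by
  rw [leftLogDeriv, dirDeriv_eq_rightLogDeriv_mul v hunit, mul_assoc]

variable [HasSummableGeomSeries A]

theorem contDiff_rightLogDeriv {n : WithTop ℕ∞} (hQ : ContDiff ℝ (n + 1) Q)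
    (hunit : ∀ p, IsUnit (Q p)) : ContDiff ℝ n (rightLogDeriv v Q) :=
  (contDiff_dirDeriv v hQ le_rfl).mul ((hQ.ringInverse_comp hunit).of_le le_self_add)

theorem contDiff_leftLogDeriv {n : WithTop ℕ∞} (hQ : ContDiff ℝ (n + 1) Q)
    (hunit : ∀ p, IsUnit (Q p)) : ContDiff ℝ n (leftLogDeriv v Q) :=
  ((hQ.ringInverse_comp hunit).of_le le_self_add).mul (contDiff_dirDeriv v hQ le_rfl)

theorem dirDeriv_mul_inverse_comp (hQ : Differentiable ℝ Q) (hunit : ∀ p, IsUnit (Q p))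
    {U : E → A} (hU : Differentiable ℝ U) :
    dirDeriv v (U * (Ring.inverse ∘ Q)) =
      dirDeriv v U * (Ring.inverse ∘ Q) - U * (Ring.inverse ∘ Q) * rightLogDeriv v Q := by
  rw [dirDeriv_mul v hU (hQ.ringInverse_comp hunit), dirDeriv_inverse_comp v hQ hunit,
    rightLogDeriv]
  noncomm_ring

theorem dirDeriv_inverse_comp_mul_mul (hQ : Differentiable ℝ Q) (hunit : ∀ p, IsUnit (Q p))
    {X : E → A} (hX : Differentiable ℝ X) :
    dirDeriv v ((Ring.inverse ∘ Q) * X * Q) = (Ring.inverse ∘ Q) *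
      (dirDeriv v X + X * rightLogDeriv v Q - rightLogDeriv v Q * X) * Q := by
  have hR := hQ.ringInverse_comp hunit
  rw [dirDeriv_mul v (hR.mul hX) hQ, dirDeriv_mul v hR hX, dirDeriv_inverse_comp v hQ hunit,
    dirDeriv_eq_rightLogDeriv_mul v hunit]
  simp only [rightLogDeriv, mul_add, add_mul, mul_sub, sub_mul, neg_mul, mul_assoc,
    mul_inverse_comp hunit, mul_one]
  noncomm_ring

theorem dirDeriv_rightLogDeriv (hQ : ContDiff ℝ 2 Q) (hunit : ∀ p, IsUnit (Q p)) :
    dirDeriv v (rightLogDeriv w Q) = dirDeriv w (rightLogDeriv v Q) +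
      (rightLogDeriv v Q * rightLogDeriv w Q - rightLogDeriv w Q * rightLogDeriv v Q) := by
  have hQ1 : Differentiable ℝ Q := hQ.differentiable two_ne_zero
  have hdQ : ∀ u, Differentiable ℝ (dirDeriv u Q) := fun u =>
    (contDiff_dirDeriv u hQ (by norm_num)).differentiable one_ne_zero
  rw [rightLogDeriv, rightLogDeriv, dirDeriv_mul_inverse_comp v hQ1 hunit (hdQ w),
    dirDeriv_mul_inverse_comp w hQ1 hunit (hdQ v), dirDeriv_comm v w hQ, rightLogDeriv,
    rightLogDeriv]
  noncomm_ring

theorem dirDeriv_dirDeriv_mul_inverse_comp (hQ : ContDiff ℝ 2 Q) (hunit : ∀ p, IsUnit (Q p)) :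
    dirDeriv v (dirDeriv v Q) * (Ring.inverse ∘ Q) =
      dirDeriv v (rightLogDeriv v Q) + rightLogDeriv v Q * rightLogDeriv v Q := by
  rw [rightLogDeriv, dirDeriv_mul_inverse_comp v (hQ.differentiable two_ne_zero) hunit
    ((contDiff_dirDeriv v hQ (by norm_num)).differentiable one_ne_zero), rightLogDeriv]
  noncomm_ring

end LogDeriv

section amKP

variable {E A : Type*} [NormedAddCommGroup E] [NormedSpace ℝ E]
  [NormedRing A] [NormedAlgebra ℝ A] (x y t : E)

noncomputable def logPotentialRHS (Q : E → A) : E → A :=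
  ((1:ℝ)/3) • (dirDeriv t Q - dirDeriv x (dirDeriv x (dirDeriv x Q)))
    + dirDeriv x Q * (Ring.inverse ∘ Q) * dirDeriv x (dirDeriv x Q)
    + dirDeriv x Q * (Ring.inverse ∘ Q) * dirDeriv y Q
    + dirDeriv y Q * (Ring.inverse ∘ Q) * dirDeriv x Q

noncomputable def amKPRHS (g f : E → A) : E → A :=
  ((1:ℝ)/3) • (dirDeriv t g - dirDeriv x (dirDeriv x (dirDeriv x g)))
    + (2:ℕ) • (g * dirDeriv x g * g) + (f * dirDeriv x g + dirDeriv x g * f)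
    + (g * dirDeriv x (dirDeriv x g) - dirDeriv x (dirDeriv x g) * g)
    - (g * g * f - f * (g * g))

/-- `q s q⁻¹` in terms of `ĝ = q_x q⁻¹`, `f̂ = q_y q⁻¹` and `ĥ = q_t q⁻¹`, by
`q_xx q⁻¹ = ĝ_x + ĝ²` and `q_xxx q⁻¹ = (ĝ_x + ĝ²)_x + (ĝ_x + ĝ²) ĝ`. -/
noncomputable def amKPPotential (g f h : E → A) : E → A :=
  ((1:ℝ)/3) • (h - (dirDeriv x (dirDeriv x g + g * g) + (dirDeriv x g + g * g) * g))
    + g * (dirDeriv x g + g * g) + g * f + f * g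

theorem contDiff_amKPPotential {g f h : E → A} (hg : ContDiff ℝ ∞ g) (hf : ContDiff ℝ ∞ f)
    (hh : ContDiff ℝ ∞ h) : ContDiff ℝ ∞ (amKPPotential x g f h) := by
  simp only [amKPPotential, Pi.mul_def, Pi.add_def, Pi.sub_def, Pi.smul_def]
  fun_prop

theorem amKP_of_compatibility {g f h : E → A} (hg : ContDiff ℝ ∞ g) (hf : ContDiff ℝ ∞ f)
    (hh : ContDiff ℝ ∞ h)
    (hfx : dirDeriv x f = dirDeriv y g + (g * f - f * g))
    (hhx : dirDeriv x h = dirDeriv t g + (g * h - h * g))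
    (hcompat : dirDeriv x (amKPPotential x g f h) + amKPPotential x g f h * g
        - g * amKPPotential x g f h = dirDeriv y (f + g * g) + (f + g * g) * f - f * (f + g * g)) :
    dirDeriv y f = amKPRHS x t g f := by
  have hdiff : ∀ {U : E → A}, ContDiff ℝ ∞ U → Differentiable ℝ U :=
    fun hU => hU.differentiable (by simp)
  simp (disch := refine hdiff ?_; simp -failIfUnchanged only [Pi.mul_def, Pi.add_def,
      Pi.sub_def, Pi.smul_def]; fun_prop) only
    [amKPPotential, dirDeriv_mul, dirDeriv_add, dirDeriv_sub, dirDeriv_smul, hfx, hhx] at hcompat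
  rw [amKPRHS, ← sub_eq_zero, ← sub_eq_zero.2 hcompat.symm]
  simp only [mul_add, add_mul, mul_sub, sub_mul, smul_add, smul_sub, mul_smul_comm,
    smul_mul_assoc, mul_assoc, two_nsmul]
  module

variable [HasSummableGeomSeries A] {Q S : E → A}

theorem eq_inverse_comp_mul_amKPPotential_mul (hQ : ContDiff ℝ ∞ Q) (hunit : ∀ p, IsUnit (Q p))
    (hlp : Q * S = logPotentialRHS x y t Q) :
    S = (Ring.inverse ∘ Q) *
      amKPPotential x (rightLogDeriv x Q) (rightLogDeriv y Q) (rightLogDeriv t Q) * Q := by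
  have hQxx := dirDeriv_dirDeriv_mul_inverse_comp x (hQ.of_le (by norm_cast)) hunit
  have hQxxx : dirDeriv x (dirDeriv x (dirDeriv x Q)) * (Ring.inverse ∘ Q) =
      dirDeriv x (dirDeriv x (rightLogDeriv x Q) + rightLogDeriv x Q * rightLogDeriv x Q)
        + (dirDeriv x (rightLogDeriv x Q) + rightLogDeriv x Q * rightLogDeriv x Q)
          * rightLogDeriv x Q := by
    rw [← hQxx, dirDeriv_mul_inverse_comp x (hQ.differentiable (by simp)) hunit
      ((by fun_prop : ContDiff ℝ ∞ (dirDeriv x (dirDeriv x Q))).differentiable (by simp))]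
    abel
  have hQSR : Q * S * (Ring.inverse ∘ Q) =
      amKPPotential x (rightLogDeriv x Q) (rightLogDeriv y Q) (rightLogDeriv t Q) := by
    rw [amKPPotential, ← hQxxx, ← hQxx, hlp, logPotentialRHS]
    simp only [rightLogDeriv, add_mul, sub_mul, smul_mul_assoc, mul_assoc]
  rw [← hQSR, mul_assoc, mul_assoc, inverse_comp_mul_self hunit, mul_one, ← mul_assoc,
    inverse_comp_mul_self hunit, one_mul]

theorem amKP_of_logPotential (hQ : ContDiff ℝ ∞ Q) (hunit : ∀ p, IsUnit (Q p))
    (hsdef : dirDeriv x S = dirDeriv y (leftLogDeriv y Q + leftLogDeriv x Q * leftLogDeriv x Q))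
    (hlp : Q * S = logPotentialRHS x y t Q) :
    dirDeriv y (rightLogDeriv y Q) = amKPRHS x t (rightLogDeriv x Q) (rightLogDeriv y Q) := by
  have hQ1 : Differentiable ℝ Q := hQ.differentiable (by simp)
  have hQ2 : ContDiff ℝ 2 Q := hQ.of_le (by norm_cast)
  have hg : ∀ v, ContDiff ℝ ∞ (rightLogDeriv v Q) := fun v => contDiff_rightLogDeriv v hQ hunit
  have hconj : leftLogDeriv y Q + leftLogDeriv x Q * leftLogDeriv x Q = (Ring.inverse ∘ Q) *
      (rightLogDeriv y Q + rightLogDeriv x Q * rightLogDeriv x Q) * Q := by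
    simp only [leftLogDeriv_eq_inverse_comp_mul_rightLogDeriv_mul _ hunit, mul_add, add_mul,
      mul_assoc, mul_inverse_comp_cancel_left hunit]
  rw [eq_inverse_comp_mul_amKPPotential_mul x y t hQ hunit hlp, hconj,
    dirDeriv_inverse_comp_mul_mul x hQ1 hunit
      ((contDiff_amKPPotential x (hg x) (hg y) (hg t)).differentiable (by simp)),
    dirDeriv_inverse_comp_mul_mul y hQ1 hunit
      (X := rightLogDeriv y Q + rightLogDeriv x Q * rightLogDeriv x Q)
      (((hg y).add ((hg x).mul (hg x))).differentiable (by simp))] at hsdef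
  exact amKP_of_compatibility x y t (hg x) (hg y) (hg t) (dirDeriv_rightLogDeriv x y hQ2 hunit)
    (dirDeriv_rightLogDeriv x t hQ2 hunit) (inverse_comp_mul_mul_cancel hunit hsdef)

end amKP

/- Any norm on matrices would do: `Smooth3` and `D3` are entrywise, and the norm only serves to
differentiate matrix-valued functions. -/
attribute [local instance] Matrix.linftyOpNormedRing Matrix.linftyOpNormedAlgebra

section Matrix

variable {m : ℕ} {U : ℝ × ℝ × ℝ → Mat m}

noncomputable def entriesCLE : Mat m ≃L[ℝ] (Fin m → Fin m → ℂ) :=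
  (Matrix.ofLinearEquiv ℝ).symm.toContinuousLinearEquiv

theorem smooth3_iff_contDiff : Smooth3 (fun x y t => U (x, y, t)) ↔ ContDiff ℝ ∞ U := by
  rw [← entriesCLE.comp_contDiff_iff, contDiff_pi]
  simp only [contDiff_pi]
  rfl

theorem hasDerivAt_entry_comp (hU : Differentiable ℝ U) {γ : ℝ → ℝ × ℝ × ℝ} {w : ℝ × ℝ × ℝ}
    {τ : ℝ} (hγ : HasDerivAt γ w τ) (i j : Fin m) :
    HasDerivAt (fun τ => U (γ τ) i j) (dirDeriv w U (γ τ) i j) τ := by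
  let entry : Mat m →L[ℝ] ℂ := (ContinuousLinearMap.proj j).comp
    ((ContinuousLinearMap.proj i).comp entriesCLE.toContinuousLinearMap)
  have hentry : HasFDerivAt (fun M : Mat m => M i j) entry (U (γ τ)) := entry.hasFDerivAt
  exact hentry.comp_hasDerivAt τ ((hU (γ τ)).hasFDerivAt.comp_hasDerivAt τ hγ)

theorem D3_one_zero_zero (hU : ContDiff ℝ ∞ U) (x y t : ℝ) :
    D3 1 0 0 (fun x y t => U (x, y, t)) x y t = dirDeriv (1, 0, 0) U (x, y, t) := by
  have hγ : HasDerivAt (fun x' => (x', y, t)) ((1, 0, 0) : ℝ × ℝ × ℝ) x :=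
    (hasDerivAt_id x).prodMk (hasDerivAt_const x (y, t))
  ext i j
  simpa [D3] using (hasDerivAt_entry_comp (hU.differentiable (by simp)) hγ i j).deriv

theorem D3_zero_one_zero (hU : ContDiff ℝ ∞ U) (x y t : ℝ) :
    D3 0 1 0 (fun x y t => U (x, y, t)) x y t = dirDeriv (0, 1, 0) U (x, y, t) := by
  have hγ : HasDerivAt (fun y' => (x, y', t)) ((0, 1, 0) : ℝ × ℝ × ℝ) y :=
    (hasDerivAt_const y x).prodMk ((hasDerivAt_id y).prodMk (hasDerivAt_const y t))
  ext i j
  simpa [D3] using (hasDerivAt_entry_comp (hU.differentiable (by simp)) hγ i j).deriv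

theorem D3_zero_zero_one (hU : ContDiff ℝ ∞ U) (x y t : ℝ) :
    D3 0 0 1 (fun x y t => U (x, y, t)) x y t = dirDeriv (0, 0, 1) U (x, y, t) := by
  have hγ : HasDerivAt (fun t' => (x, y, t')) ((0, 0, 1) : ℝ × ℝ × ℝ) t :=
    (hasDerivAt_const t x).prodMk ((hasDerivAt_const t y).prodMk (hasDerivAt_id t))
  ext i j
  simpa [D3] using (hasDerivAt_entry_comp (hU.differentiable (by simp)) hγ i j).deriv

theorem D3_succ_zero_zero (c : ℕ) (u : ℝ → ℝ → ℝ → Mat m) :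
    D3 (c + 1) 0 0 u = D3 c 0 0 (D3 1 0 0 u) := by
  funext x y t
  ext i j
  simp [D3, iteratedDeriv_succ']

theorem D3_zero_zero_eq_iterate (hU : ContDiff ℝ ∞ U) (c : ℕ) (x y t : ℝ) :
    D3 c 0 0 (fun x y t => U (x, y, t)) x y t = (dirDeriv (1, 0, 0))^[c] U (x, y, t) := by
  induction c generalizing U with
  | zero => ext i j; simp [D3]
  | succ c ih =>
    rw [D3_succ_zero_zero, funext₃ (D3_one_zero_zero hU), ih (contDiff_infty_dirDeriv _ hU),
      Function.iterate_succ_apply]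

end Matrix

/-- **From the log-potential mKP equation to the amKP form ((1.2) ⇒ (1.3)).**
If `q` is smooth and pointwise invertible, `s` is smooth with
`∂_x s = ∂_y(q⁻¹q_y + (q⁻¹q_x)²)`, and `q` satisfies the log-potential mKP equation
`q·s = (1/3)(q_t − q_xxx) + q_x q⁻¹ q_xx + q_x q⁻¹ q_y + q_y q⁻¹ q_x`, then
`ĝ := q_x q⁻¹` and `f̂ := q_y q⁻¹` satisfy
`f̂_x = ĝ_y + [ĝ,f̂]` and
`f̂_y = (1/3)(ĝ_t − ĝ_xxx) + 2ĝĝ_xĝ + {f̂,ĝ_x} + [ĝ,ĝ_xx] − [ĝ²,f̂]`. -/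
theorem log_potential_to_amKP {m : ℕ} (q s : ℝ → ℝ → ℝ → Mat m)
    (hq : Smooth3 q) (hs : Smooth3 s)
    (hinv : ∀ x y t : ℝ, IsUnit (q x y t))
    (hsdef : ∀ x y t : ℝ, D3 1 0 0 s x y t
      = D3 0 1 0 (fun x' y' t' =>
          Ring.inverse (q x' y' t') * D3 0 1 0 q x' y' t'
            + (Ring.inverse (q x' y' t') * D3 1 0 0 q x' y' t')
              * (Ring.inverse (q x' y' t') * D3 1 0 0 q x' y' t')) x y t)
    (hlp : ∀ x y t : ℝ, q x y t * s x y t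
      = ((1:ℂ)/3) • (D3 0 0 1 q x y t - D3 3 0 0 q x y t)
        + D3 1 0 0 q x y t * Ring.inverse (q x y t) * D3 2 0 0 q x y t
        + D3 1 0 0 q x y t * Ring.inverse (q x y t) * D3 0 1 0 q x y t
        + D3 0 1 0 q x y t * Ring.inverse (q x y t) * D3 1 0 0 q x y t)
    (gh fh : ℝ → ℝ → ℝ → Mat m)
    (hgh : ∀ x y t : ℝ, gh x y t = D3 1 0 0 q x y t * Ring.inverse (q x y t))
    (hfh : ∀ x y t : ℝ, fh x y t = D3 0 1 0 q x y t * Ring.inverse (q x y t)) :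
    (∀ x y t : ℝ, D3 1 0 0 fh x y t
      = D3 0 1 0 gh x y t + (gh x y t * fh x y t - fh x y t * gh x y t)) ∧
    (∀ x y t : ℝ, D3 0 1 0 fh x y t
      = ((1:ℂ)/3) • (D3 0 0 1 gh x y t - D3 3 0 0 gh x y t)
        + (2:ℕ) • (gh x y t * D3 1 0 0 gh x y t * gh x y t)
        + (fh x y t * D3 1 0 0 gh x y t + D3 1 0 0 gh x y t * fh x y t)
        + (gh x y t * D3 2 0 0 gh x y t - D3 2 0 0 gh x y t * gh x y t)
        - ((gh x y t * gh x y t) * fh x y t - fh x y t * (gh x y t * gh x y t))) := by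
  obtain ⟨Q, rfl⟩ : ∃ Q : ℝ × ℝ × ℝ → Mat m, q = fun x y t => Q (x, y, t) :=
    ⟨fun p => q p.1 p.2.1 p.2.2, rfl⟩
  obtain ⟨S, rfl⟩ : ∃ S : ℝ × ℝ × ℝ → Mat m, s = fun x y t => S (x, y, t) :=
    ⟨fun p => s p.1 p.2.1 p.2.2, rfl⟩
  rw [smooth3_iff_contDiff] at hq hs
  have hunit : ∀ p, IsUnit (Q p) := fun p => hinv p.1 p.2.1 p.2.2
  obtain rfl : gh = fun x y t => rightLogDeriv (1, 0, 0) Q (x, y, t) := by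
    funext x y t; rw [hgh, D3_one_zero_zero hq]; rfl
  obtain rfl : fh = fun x y t => rightLogDeriv (0, 1, 0) Q (x, y, t) := by
    funext x y t; rw [hfh, D3_zero_one_zero hq]; rfl
  have hr : ∀ v, ContDiff ℝ ∞ (rightLogDeriv v Q) := fun v => contDiff_rightLogDeriv v hq hunit
  have hl : ∀ v, ContDiff ℝ ∞ (leftLogDeriv v Q) := fun v => contDiff_leftLogDeriv v hq hunit
  have third : (1 : ℂ) / 3 = ((1 / 3 : ℝ) : ℂ) := by push_cast; ring
  have hlp' : Q * S = logPotentialRHS (1, 0, 0) (0, 1, 0) (0, 0, 1) Q := funext fun ⟨x, y, t⟩ => by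
    have h := hlp x y t
    simp only [D3_zero_zero_eq_iterate hq, D3_zero_one_zero hq, D3_zero_zero_one hq, third,
      Complex.coe_smul] at h
    exact h
  have hsdef' : dirDeriv (1, 0, 0) S = dirDeriv (0, 1, 0) (leftLogDeriv (0, 1, 0) Q
      + leftLogDeriv (1, 0, 0) Q * leftLogDeriv (1, 0, 0) Q) := funext fun ⟨x, y, t⟩ => by
    have h := hsdef x y t
    simp only [D3_one_zero_zero hq, D3_zero_one_zero hq, D3_one_zero_zero hs] at h
    exact h.trans (D3_zero_one_zero ((hl _).add ((hl _).mul (hl _))) x y t)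
  refine ⟨fun x y t => ?_, fun x y t => ?_⟩
  · rw [D3_one_zero_zero (hr _), D3_zero_one_zero (hr _)]
    exact congrFun (dirDeriv_rightLogDeriv _ _ (hq.of_le (by norm_cast)) hunit) (x, y, t)
  · simp only [D3_zero_one_zero (hr _), D3_zero_zero_one (hr _),
      D3_zero_zero_eq_iterate (hr _), third, Complex.coe_smul]
    exact congrFun (amKP_of_logPotential _ _ _ hq hunit hsdef' hlp') (x, y, t)

end NCKP
end

section
/- Commutative reduction of the lifted mKP equations. Let g, m : ℝ³ → ℝ be smooth functions of (x,y,t) (subscripts denote partial derivatives) satisfying m_x = g_y (so m plays the role of Dg with D = ∂_x^{-1}∂_y) and the commutative potential mKP equation m_y = (1/3)(g_t − g_{xxx}) + 2 g_x (m + g²). Then, with f := m, the third lifted mKP equation holds in its x-differentiated (local) form: ∂_y²(f + g²) = ∂_x[(1/3)(f_t − f_{xxx}) + 2 f_x (f + g²) + 2 g m_y]. Equivalently, in the commutative setting the triple (Dg, g, Dg), i.e. h = f = Dg, solves the commutative version of the lifted mKP equations. -/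
/-!
The identity is a formal consequence of the hypotheses in any commutative algebra with three
commuting derivations `∂_x, ∂_y, ∂_t`. Differentiating the dispersive term `c (m_t - m_xxx)` in `x`
and using `m_x = g_y` turns it into `∂_y` of `c (g_t - g_xxx) = m_y - 2 g_x (m + g²)`; the
remaining terms then cancel by the Leibniz rule. Smooth functions on `ℝ³` with the coordinate
directional derivatives form such an algebra, the derivations commuting by the symmetry of second
derivatives, and iterated partial derivatives are iterates of these derivations.
-/

namespace NCKP

/-- `∂_x^c ∂_y^d ∂_t^e` of a real-valued function of `(x,y,t)`. -/
noncomputable def D3r (c d e : ℕ) (u : ℝ → ℝ → ℝ → ℝ) : ℝ → ℝ → ℝ → ℝ :=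
  fun x y t =>
    iteratedDeriv c (fun x' =>
      iteratedDeriv d (fun y' =>
        iteratedDeriv e (fun t' => u x' y' t') t) y) x

/-- Smoothness of a real-valued function of `(x,y,t)`. -/
def Smooth3r (u : ℝ → ℝ → ℝ → ℝ) : Prop :=
  ContDiff ℝ (⊤ : ℕ∞) (fun v : ℝ × ℝ × ℝ => u v.1 v.2.1 v.2.2)

end NCKP

theorem Derivation.map_ofNat {R A M : Type*} [CommSemiring R] [CommSemiring A] [AddCommMonoid M]
    [Algebra R A] [Module A M] [Module R M] (D : Derivation R A M) (n : ℕ) [n.AtLeastTwo] :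
    D (no_index (OfNat.ofNat n : A)) = 0 := by
  rw [← Nat.cast_ofNat]
  exact D.map_natCast n

section DifferentialAlgebra

variable {S R : Type*} [CommSemiring S] [CommRing R] [Algebra S R]

theorem lifted_mKP_of_potential_mKP {X Y T : Derivation S R R}
    (hXY : ∀ a, X (Y a) = Y (X a)) (hXT : ∀ a, X (T a) = T (X a))
    (hYT : ∀ a, Y (T a) = T (Y a)) {c : S} {g m : R} (hDg : X m = Y g)
    (hmKP : Y m = c • (T g - X (X (X g))) + 2 * X g * (m + g ^ 2)) :
    Y (Y (m + g ^ 2)) = X (c • (T m - X (X (X m))) + 2 * X m * (m + g ^ 2) + 2 * g * Y m) := by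
  have hdispersive : X (c • (T m - X (X (X m)))) = Y (Y m - 2 * X g * (m + g ^ 2)) := by
    have hlin : X (T m - X (X (X m))) = Y (T g - X (X (X g))) := by
      simp only [map_sub, hXT, hYT, hXY, hDg]
    rw [X.map_smul, hlin, ← Y.map_smul, hmKP, add_sub_cancel_right]
  rw [map_add X, map_add X, hdispersive]
  simp only [map_add, map_sub, pow_two, Derivation.leibniz, hDg, hXY, smul_eq_mul,
    Derivation.map_ofNat]
  ring

end DifferentialAlgebra

section SmoothFunctions

open scoped ContDiff

variable (E : Type*) [NormedAddCommGroup E] [NormedSpace ℝ E]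

def smoothFunctions : Subalgebra ℝ (E → ℝ) where
  carrier := {U | ContDiff ℝ ∞ U}
  mul_mem' {U V} (hU : ContDiff ℝ ∞ U) (hV : ContDiff ℝ ∞ V) := hU.mul hV
  add_mem' {U V} (hU : ContDiff ℝ ∞ U) (hV : ContDiff ℝ ∞ V) := hU.add hV
  algebraMap_mem' c := (contDiff_const : ContDiff ℝ ∞ fun _ : E => c)

variable {E}

theorem smoothFunctions.contDiff (U : smoothFunctions E) : ContDiff ℝ ∞ (U : E → ℝ) :=
  U.2

theorem smoothFunctions.differentiable (U : smoothFunctions E) : Differentiable ℝ (U : E → ℝ) :=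
  (smoothFunctions.contDiff U).differentiable (by simp)

theorem smoothFunctions.fderiv_apply_mem (U : smoothFunctions E) (v : E) :
    (fun p => fderiv ℝ (U : E → ℝ) p v) ∈ smoothFunctions E :=
  ((smoothFunctions.contDiff U).fderiv_right (m := ∞) (by exact_mod_cast le_top)).clm_apply
    contDiff_const

noncomputable def directionalDeriv (v : E) :
    Derivation ℝ (smoothFunctions E) (smoothFunctions E) :=
  Derivation.mk'
    { toFun := fun U => ⟨fun p => fderiv ℝ (U : E → ℝ) p v, smoothFunctions.fderiv_apply_mem U v⟩
      map_add' := fun U V => by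
        ext p
        exact congrArg (· v) (fderiv_add (smoothFunctions.differentiable U p)
          (smoothFunctions.differentiable V p))
      map_smul' := fun c U => by
        ext p
        exact congrArg (· v) (fderiv_const_smul (smoothFunctions.differentiable U p) c) }
    fun U V => by
      ext p
      have hmul := congrArg (· v) (fderiv_mul (smoothFunctions.differentiable U p)
        (smoothFunctions.differentiable V p))
      simpa [add_comm] using hmul

theorem coe_directionalDeriv (v : E) (U : smoothFunctions E) :
    (directionalDeriv v U : E → ℝ) = fun p => fderiv ℝ (U : E → ℝ) p v :=
  rfl

theorem directionalDeriv_comm (v w : E) (U : smoothFunctions E) :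
    directionalDeriv v (directionalDeriv w U) = directionalDeriv w (directionalDeriv v U) := by
  have hfderiv : Differentiable ℝ (fderiv ℝ (U : E → ℝ)) :=
    ((smoothFunctions.contDiff U).fderiv_right (m := ∞) (by exact_mod_cast le_top)).differentiable
      (by simp)
  have hsnd : ∀ v w p, fderiv ℝ (fun q => fderiv ℝ (U : E → ℝ) q w) p v =
      fderiv ℝ (fderiv ℝ (U : E → ℝ)) p v w := fun v w p => by
    rw [fderiv_clm_apply (hfderiv p) (differentiableAt_const w)]
    simp
  ext p
  simp only [coe_directionalDeriv, hsnd]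
  exact (smoothFunctions.contDiff U).contDiffAt.isSymmSndFDerivAt
    (by rw [minSmoothness_of_isRCLikeNormedField]; exact WithTop.coe_le_coe.2 le_top) v w

theorem iteratedDeriv_comp_line (U : smoothFunctions E) (a v : E) (n : ℕ) :
    iteratedDeriv n (fun s : ℝ => (U : E → ℝ) (a + s • v)) =
      fun s => ((directionalDeriv v)^[n] U : E → ℝ) (a + s • v) := by
  induction n generalizing U with
  | zero => rfl
  | succ n ih =>
    have hline : deriv (fun s : ℝ => (U : E → ℝ) (a + s • v)) =
        fun s => (directionalDeriv v U : E → ℝ) (a + s • v) := by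
      funext s
      have hL : HasDerivAt (fun s : ℝ => a + s • v) v s := by
        simpa using ((hasDerivAt_id s).smul_const v).const_add a
      exact ((smoothFunctions.differentiable U _).hasFDerivAt.comp_hasDerivAt s hL).deriv
    rw [iteratedDeriv_succ', hline, ih, Function.iterate_succ_apply]

end SmoothFunctions

namespace NCKP

local notation "∂x" => directionalDeriv ((1, 0, 0) : ℝ × ℝ × ℝ)
local notation "∂y" => directionalDeriv ((0, 1, 0) : ℝ × ℝ × ℝ)
local notation "∂t" => directionalDeriv ((0, 0, 1) : ℝ × ℝ × ℝ)

theorem D3r_eq_iterate (U : smoothFunctions (ℝ × ℝ × ℝ)) (c d e : ℕ) (x y t : ℝ) :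
    D3r c d e (fun x y t => (U : ℝ × ℝ × ℝ → ℝ) (x, y, t)) x y t =
      ((∂x)^[c] ((∂y)^[d] ((∂t)^[e] U)) : ℝ × ℝ × ℝ → ℝ) (x, y, t) := by
  have ht : ∀ x' y', iteratedDeriv e (fun t' => (U : ℝ × ℝ × ℝ → ℝ) (x', y', t')) t =
      ((∂t)^[e] U : ℝ × ℝ × ℝ → ℝ) (x', y', t) := fun x' y' => by
    simpa using congrFun (iteratedDeriv_comp_line U (x', y', 0) (0, 0, 1) e) t
  have hy : ∀ (V : smoothFunctions (ℝ × ℝ × ℝ)) x',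
      iteratedDeriv d (fun y' => (V : ℝ × ℝ × ℝ → ℝ) (x', y', t)) y =
        ((∂y)^[d] V : ℝ × ℝ × ℝ → ℝ) (x', y, t) := fun V x' => by
    simpa using congrFun (iteratedDeriv_comp_line V (x', 0, t) (0, 1, 0) d) y
  have hx : ∀ V : smoothFunctions (ℝ × ℝ × ℝ),
      iteratedDeriv c (fun x' => (V : ℝ × ℝ × ℝ → ℝ) (x', y, t)) x =
        ((∂x)^[c] V : ℝ × ℝ × ℝ → ℝ) (x, y, t) := fun V => by
    simpa using congrFun (iteratedDeriv_comp_line V (0, y, t) (1, 0, 0) c) x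
  simp only [D3r, ht, hy, hx]

/-- **Commutative reduction of the lifted mKP equations.** If `g`, `m'` are smooth,
`m'_x = g_y` (so `m'` plays the role of `Dg`), and the commutative potential mKP
equation `m'_y = (1/3)(g_t − g_xxx) + 2 g_x (m' + g²)` holds, then with `f := m'`
the third lifted mKP equation holds in its `x`-differentiated local form:
`∂_y²(f + g²) = ∂_x[(1/3)(f_t − f_xxx) + 2 f_x (f + g²) + 2 g m'_y]`;
i.e. the triple `(Dg, g, Dg)` solves the commutative lifted mKP equations. -/
theorem commutative_lifted_mKP_reduction (g m' : ℝ → ℝ → ℝ → ℝ)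
    (hg : Smooth3r g) (hm : Smooth3r m')
    (hDg : ∀ x y t : ℝ, D3r 1 0 0 m' x y t = D3r 0 1 0 g x y t)
    (hmKP : ∀ x y t : ℝ, D3r 0 1 0 m' x y t
      = (1/3) * (D3r 0 0 1 g x y t - D3r 3 0 0 g x y t)
        + 2 * D3r 1 0 0 g x y t * (m' x y t + (g x y t)^2)) :
    ∀ x y t : ℝ,
      D3r 0 2 0 (fun x' y' t' => m' x' y' t' + (g x' y' t')^2) x y t
      =
      D3r 1 0 0 (fun x' y' t' =>
        (1/3) * (D3r 0 0 1 m' x' y' t' - D3r 3 0 0 m' x' y' t')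
        + 2 * D3r 1 0 0 m' x' y' t' * (m' x' y' t' + (g x' y' t')^2)
        + 2 * g x' y' t' * D3r 0 1 0 m' x' y' t') x y t := by
  obtain ⟨G, rfl⟩ : ∃ G : smoothFunctions (ℝ × ℝ × ℝ),
      g = fun x y t => (G : ℝ × ℝ × ℝ → ℝ) (x, y, t) := ⟨⟨_, hg⟩, rfl⟩
  obtain ⟨M, rfl⟩ : ∃ M : smoothFunctions (ℝ × ℝ × ℝ),
      m' = fun x y t => (M : ℝ × ℝ × ℝ → ℝ) (x, y, t) := ⟨⟨_, hm⟩, rfl⟩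
  simp only [D3r_eq_iterate, Function.iterate_zero, Function.iterate_succ, Function.comp_apply,
    id] at hDg hmKP ⊢
  have key := lifted_mKP_of_potential_mKP (X := ∂x) (Y := ∂y) (T := ∂t) (c := (1 / 3 : ℝ))
    (directionalDeriv_comm _ _) (directionalDeriv_comm _ _) (directionalDeriv_comm _ _)
    (Subtype.ext (funext fun p => hDg p.1 p.2.1 p.2.2))
    (Subtype.ext (funext fun p => hmKP p.1 p.2.1 p.2.2))
  intro x y t
  have hL := D3r_eq_iterate (M + G ^ 2) 0 2 0 x y t
  have hR := D3r_eq_iterate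
    ((1 / 3 : ℝ) • (∂t M - ∂x (∂x (∂x M))) + 2 * ∂x M * (M + G ^ 2) + 2 * G * ∂y M) 1 0 0 x y t
  simp only [Function.iterate_zero, Function.iterate_succ, Function.comp_apply, id] at hL hR
  exact hL.trans ((congrFun (congrArg Subtype.val key) (x, y, t)).trans hR.symm)

end NCKP
end
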